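/- arXiv:2502.12841 — 2 statements merged into one kernel-verified Lean document; each statement's English description precedes it below -/
import Mathlib

section
/- Let G be a finite group acting on a set Ω, let P be a Sylow p-subgroup of G, and let x, y ∈ Ω be elements whose stabilizers both contain P. If y = g • x for some g ∈ G, then there exists n ∈ N_G(P) with y = n • x. -/
/-- If the stabilizers of `x` and `y` both contain a Sylow `p`-subgroup `P` of `G`
and `y = g • x` for some `g ∈ G`, then `y = n • x` for some `n ∈ N_G(P)`. -/
theorem conj_by_normalizer_of_stabilizers_containing_sylow
    {G : Type*} [Group G] [Fintype G] {p : ℕ} [Fact p.Prime]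
    {Ω : Type*} [MulAction G Ω] (P : Sylow p G) (x y : Ω)
    (hx : (P : Subgroup G) ≤ MulAction.stabilizer G x)
    (hy : (P : Subgroup G) ≤ MulAction.stabilizer G y)
    (g : G) (hg : y = g • x) :
    ∃ n ∈ Subgroup.normalizer ((P : Subgroup G) : Set G), y = n • x := by
  classical
  have h2 : ((g⁻¹ • P : Sylow p G) : Subgroup G) ≤ MulAction.stabilizer G x := by
    intro z hz
    obtain ⟨w, hw, rfl⟩ := hz
    have hws : (w : G) ∈ MulAction.stabilizer G y := hy hw
    rw [MulAction.mem_stabilizer_iff] at hws ⊢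
    show (MulAut.conj g⁻¹ w) • x = x
    rw [MulAut.conj_apply, inv_inv, mul_smul, mul_smul, ← hg, hws, hg, inv_smul_smul]
  obtain ⟨h, hh⟩ :=
    MulAction.exists_smul_eq (MulAction.stabilizer G x)
      ((g⁻¹ • P).subtype h2) (P.subtype hx)
  simp_rw [Sylow.smul_subtype, Subgroup.smul_def, smul_smul] at hh
  have hn : (↑h * g⁻¹) ∈ Subgroup.normalizer ((P : Subgroup G) : Set G) :=
    Sylow.smul_eq_iff_mem_normalizer.mp (Sylow.subtype_injective hh)
  refine ⟨(↑h * g⁻¹)⁻¹, (Subgroup.normalizer _).inv_mem hn, ?_⟩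
  have hhx : (h : G)⁻¹ • x = x := inv_smul_eq_iff.mpr h.2.symm
  rw [hg, mul_inv_rev, inv_inv, mul_smul, hhx]
end

section
/- Let G be a finite group with center Z of order coprime to p, let P be a Sylow p-subgroup of G, and suppose that the image PZ/Z of P in G/Z is self-normalizing in G/Z. Then N_G(P) = P × Z, i.e., N_G(P) is the internal direct product of P and Z. -/
/-- If the center `Z` of `G` has order coprime to `p` and the image of a Sylow
`p`-subgroup `P` in `G/Z` is self-normalizing, then `N_G(P) = P × Z`
(an internal direct product: `N_G(P) = PZ` and `P ∩ Z = 1`). -/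
theorem normalizer_eq_sylow_mul_center {G : Type*} [Group G] [Fintype G]
    {p : ℕ} [Fact p.Prime] (P : Sylow p G)
    (hZ : ¬ p ∣ Nat.card (Subgroup.center G))
    (hsn : Subgroup.normalizer ((Subgroup.map (QuotientGroup.mk' (Subgroup.center G))
        (P : Subgroup G) : Subgroup (G ⧸ Subgroup.center G)) : Set (G ⧸ Subgroup.center G))
      = Subgroup.map (QuotientGroup.mk' (Subgroup.center G)) (P : Subgroup G)) :
    Subgroup.normalizer ((P : Subgroup G) : Set G) = (P : Subgroup G) ⊔ Subgroup.center G ∧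
      (P : Subgroup G) ⊓ Subgroup.center G = ⊥ := by
  constructor
  · apply le_antisymm
    · intro g hg
      have h1 : (QuotientGroup.mk' (Subgroup.center G)) g ∈
          Subgroup.normalizer ((Subgroup.map (QuotientGroup.mk' (Subgroup.center G)) (P : Subgroup G) : Subgroup (G ⧸ Subgroup.center G)) : Set (G ⧸ Subgroup.center G)) :=
        Subgroup.le_normalizer_map _ ⟨g, hg, rfl⟩
      rw [hsn] at h1
      have h2 : g ∈ Subgroup.comap (QuotientGroup.mk' (Subgroup.center G))
          (Subgroup.map (QuotientGroup.mk' (Subgroup.center G)) (P : Subgroup G)) := h1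
      rwa [Subgroup.comap_map_eq, QuotientGroup.ker_mk'] at h2
    · rw [sup_le_iff]
      exact ⟨Subgroup.le_normalizer, fun z hz => Subgroup.mem_normalizer_iff.mpr fun h => by
          have : z * h * z⁻¹ = h := by
            rw [← Subgroup.mem_center_iff.mp hz h, mul_assoc, mul_inv_cancel, mul_one]
          rw [this]⟩
  · rw [Subgroup.eq_bot_iff_forall]
    intro x hx
    obtain ⟨hxP, hxZ⟩ := hx
    have hord : orderOf x ∣ Nat.card (Subgroup.center G) :=
      Subgroup.orderOf_dvd_natCard _ (by exact hxZ)
    obtain ⟨k, hk⟩ := P.2 ⟨x, hxP⟩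
    have hxpk : x ^ p ^ k = 1 := by
      simpa [Subtype.ext_iff] using hk
    have h1 : orderOf x ∣ p ^ k := orderOf_dvd_of_pow_eq_one hxpk
    have hcop : (p ^ k).Coprime (Nat.card (Subgroup.center G)) :=
      Nat.Coprime.pow_left _ (((Fact.out : p.Prime).coprime_iff_not_dvd).mpr hZ)
    have := Nat.eq_one_of_dvd_coprimes hcop h1 hord
    exact orderOf_eq_one_iff.mp this
end
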